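/- Let (M,d) be a metric space, let S ⊆ M be a finite set, let η ≥ 0 and let π : S → M be a map with d(s, π(s)) ≤ η for every s ∈ S. Let q ∈ M and ε > 0, and suppose ŝ ∈ S satisfies d(q, π(ŝ)) ≤ (1+ε)·d(q, π(s)) for every s ∈ S. Then d(q, ŝ) ≤ (1+ε)·d(q, s) + (2+ε)·η for every s ∈ S. -/
import Mathlib


open Set Metric

/-- the correctness statement underlying Lemma 6.2 of the paper. If every
point of a finite set `S` is moved by at most `η` by a projection `π`, and `shat ∈ S` is a
`(1+ε)`-approximate nearest neighbour of `q` among the projected points, then `shat` is a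
nearest neighbour of `q` in `S` up to multiplicative error `1+ε` and additive error
`(2+ε)·η`. -/
theorem projected_ann {M : Type*} [MetricSpace M] (S : Finset M) (η : ℝ) (hη : 0 ≤ η)
    (π : M → M) (hπ : ∀ s ∈ S, dist s (π s) ≤ η) (q : M) (ε : ℝ) (hε : 0 < ε)
    (shat : M) (hshat : shat ∈ S) (h : ∀ s ∈ S, dist q (π shat) ≤ (1 + ε) * dist q (π s)) :
    ∀ s ∈ S, dist q shat ≤ (1 + ε) * dist q s + (2 + ε) * η := by
  intro s hs
  have h1 : dist q shat ≤ dist q (π shat) + dist (π shat) shat := dist_triangle _ _ _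
  have h2 : dist (π shat) shat ≤ η := by rw [dist_comm]; exact hπ _ hshat
  have h3 : dist q (π shat) ≤ (1 + ε) * dist q (π s) := h s hs
  have h4 : dist q (π s) ≤ dist q s + η := by
    calc dist q (π s) ≤ dist q s + dist s (π s) := dist_triangle _ _ _
      _ ≤ dist q s + η := by linarith [hπ s hs]
  nlinarith [dist_nonneg (x := q) (y := s)]
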